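/- Let V be a ℤ_{≥0}-graded conformal vertex algebra with V₀ = ℂ𝟙, and suppose Zhu's C₂-algebra R_V = V/C₂(V) is finite-dimensional. Then every graded component of gr_F A(V) is finite-dimensional and the filtration F_• A(V) stabilizes, so Zhu's algebra A(V) is finite-dimensional. -/

import Mathlib

/-- The generalized binomial coefficient `(p choose i)` for `p : ℤ`, as a complex number. -/
noncomputable def cc (p : ℤ) (i : ℕ) : ℂ :=
  (∏ k ∈ Finset.range i, ((p : ℂ) - (k : ℂ))) / (Nat.factorial i : ℂ)

/-- A vertex algebra structure on a complex vector space `V`: a vacuum `one`,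
bilinear products `nmul n a b = a_{(n)} b`, truncation, vacuum axioms, and the
Borcherds identity. -/
structure VertexAlg (V : Type*) [AddCommGroup V] [Module ℂ V] where
  one : V
  nmul : ℤ → V → V → V
  nmul_add_left : ∀ (n : ℤ) (a b c : V), nmul n (a + b) c = nmul n a c + nmul n b c
  nmul_add_right : ∀ (n : ℤ) (a b c : V), nmul n a (b + c) = nmul n a b + nmul n a c
  nmul_smul_left : ∀ (n : ℤ) (s : ℂ) (a b : V), nmul n (s • a) b = s • nmul n a b
  nmul_smul_right : ∀ (n : ℤ) (s : ℂ) (a b : V), nmul n a (s • b) = s • nmul n a b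
  one_nmul : ∀ (n : ℤ) (b : V), nmul n one b = if n = -1 then b else 0
  nmul_neg_one_one : ∀ a : V, nmul (-1) a one = a
  nmul_one : ∀ (a : V) (n : ℤ), 0 ≤ n → nmul n a one = 0
  trunc : ∀ a b : V, ∃ N : ℤ, ∀ n : ℤ, N ≤ n → nmul n a b = 0
  borcherds : ∀ (p q r : ℤ) (a b c : V),
    (∑ᶠ i : ℕ, cc p i • nmul (p + q - i) (nmul (r + i) a b) c)
      = ∑ᶠ i : ℕ, ((-1 : ℂ) ^ i * cc r i) •
          (nmul (p + r - i) a (nmul (q + i) b c)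
            - ((-1 : ℂ) ^ r) • nmul (q + r - i) b (nmul (p + i) a c))

/-- A module over a vertex algebra `(V, 𝒱)`: operators `act n a = a_{(n)}` on `M`
satisfying bilinearity, the vacuum axiom, truncation and the Borcherds identity. -/
structure VAModuleStr {V : Type*} [AddCommGroup V] [Module ℂ V] (𝒱 : VertexAlg V)
    (M : Type*) [AddCommGroup M] [Module ℂ M] where
  act : ℤ → V → M → M
  act_add_left : ∀ (n : ℤ) (a b : V) (m : M), act n (a + b) m = act n a m + act n b m
  act_add_right : ∀ (n : ℤ) (a : V) (m m' : M), act n a (m + m') = act n a m + act n a m'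
  act_smul_left : ∀ (n : ℤ) (s : ℂ) (a : V) (m : M), act n (s • a) m = s • act n a m
  act_smul_right : ∀ (n : ℤ) (s : ℂ) (a : V) (m : M), act n a (s • m) = s • act n a m
  one_act : ∀ (n : ℤ) (m : M), act n 𝒱.one m = if n = -1 then m else 0
  trunc : ∀ (a : V) (m : M), ∃ N : ℤ, ∀ n : ℤ, N ≤ n → act n a m = 0
  borcherds : ∀ (p q r : ℤ) (a b : V) (m : M),
    (∑ᶠ i : ℕ, cc p i • act (p + q - i) (𝒱.nmul (r + i) a b) m)
      = ∑ᶠ i : ℕ, ((-1 : ℂ) ^ i * cc r i) •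
          (act (p + r - i) a (act (q + i) b m)
            - ((-1 : ℂ) ^ r) • act (q + r - i) b (act (p + i) a m))

/-!
Modulo `O(V)` the translation operator `T a = a₍₋₂₎𝟙` acts on the weight space `V_m` as `-m`
(the relation `T a + m a ∈ O(V)`). Applying powers of `T` to a relation `∑ x_f = 0` between
homogeneous elements and inverting the resulting Vandermonde-type system shows that the weight
spaces are independent modulo `O(V)`. With this, an induction on weight shows that an element of
`C₂(V)` of weight `≤ p` lies in `O(V)` plus weights `< p`, since a generator `a₍₋₂₎b` is congruent
modulo `O(V)` to products of lower weight; this is the surjection `R_V ↠ gr_F A(V)`. Complements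
`Y_p` of `V_{≤p} ∩ (V_{<p} + C₂(V))` in `V_{≤p}` then span a subspace `U` with `U ∩ C₂(V) = 0`
and `U + O(V) = V`, so `A(V)` is a quotient of a subspace of `R_V`.
-/

open Polynomial

theorem monotone_iSup_lt {α : Type*} [CompleteLattice α] (u : ℕ → α) :
    Monotone fun n => ⨆ k < n, u k :=
  fun _ _ h => biSup_mono fun _ hk => hk.trans_le h

theorem iSup_iSup_lt_eq_iSup {α : Type*} [CompleteLattice α] (u : ℕ → α) :
    ⨆ n, ⨆ k < n, u k = ⨆ k, u k :=
  le_antisymm (iSup_le fun _ => iSup₂_le fun k _ => le_iSup u k)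
    (iSup_le fun k => le_iSup_of_le (k + 1) (le_iSup₂_of_le k k.lt_succ_self le_rfl))

theorem disjoint_iSup_of_disjoint_iSup_lt_sup {α : Type*} [CompleteLattice α] [IsModularLattice α]
    [IsCompactlyGenerated α] {Y : ℕ → α} {c : α}
    (hY : ∀ n, Disjoint (Y n) ((⨆ k < n, Y k) ⊔ c)) : Disjoint (⨆ n, Y n) c := by
  have hpartial : ∀ n, Disjoint (⨆ k < n, Y k) c := by
    intro n
    induction n with
    | zero => simp
    | succ n ih =>
      rw [Nat.iSup_lt_succ, sup_comm]
      exact ih.disjoint_sup_left_of_disjoint_sup_right (hY n)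
  rw [← iSup_iSup_lt_eq_iSup]
  exact (monotone_iSup_lt Y).directed_le.disjoint_iSup_left.2 hpartial

theorem Submodule.mem_of_forall_sum_descPochhammer_smul_mem {K M ι : Type*} [Field K]
    [AddCommGroup M] [Module K M] (N : Submodule K M) {s : Finset ι} {w : ι → K}
    (hw : Set.InjOn w s) {x : ι → M}
    (h : ∀ j, ∑ i ∈ s, (descPochhammer K j).eval (w i) • x i ∈ N) : ∀ i ∈ s, x i ∈ N := by
  classical
  induction s using Finset.induction_on generalizing x with
  | empty => simp
  | insert a s ha ih =>
    have hs : ∀ i ∈ s, x i ∈ N := by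
      intro i hi
      have hne : w i - w a ≠ 0 := sub_ne_zero.2 fun he =>
        ha (hw (Finset.mem_insert_of_mem hi) (Finset.mem_insert_self a s) he ▸ hi)
      refine (N.smul_mem_iff hne).1 (ih (hw.mono (by simp)) (x := fun i => (w i - w a) • x i)
        (fun j => ?_) i hi)
      -- `(X - w a) * P_j = P_{j+1} - (w a - j) * P_j`, and the `a`-term of the left side vanishes.
      have hshift : ∑ i ∈ s, (descPochhammer K j).eval (w i) • (w i - w a) • x i
          = ∑ i ∈ insert a s, (descPochhammer K (j + 1)).eval (w i) • x i
            - (w a - j) • ∑ i ∈ insert a s, (descPochhammer K j).eval (w i) • x i := by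
        calc ∑ i ∈ s, (descPochhammer K j).eval (w i) • (w i - w a) • x i
            = ∑ i ∈ insert a s, ((descPochhammer K j).eval (w i) * (w i - w a)) • x i := by
              simp [Finset.sum_insert ha, smul_smul]
          _ = _ := by
              rw [Finset.smul_sum, ← Finset.sum_sub_distrib]
              refine Finset.sum_congr rfl fun i _ => ?_
              rw [descPochhammer_succ_eval, smul_smul, ← sub_smul]
              ring_nf
      rw [hshift]
      exact sub_mem (h (j + 1)) (N.smul_mem _ (h j))
    intro i hi
    rcases Finset.mem_insert.1 hi with rfl | hi
    · have h0 := h 0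
      simp only [descPochhammer_zero, eval_one, one_smul, Finset.sum_insert ha] at h0
      simpa using sub_mem h0 (N.sum_mem hs)
    · exact hs i hi

theorem Submodule.finiteDimensional_quotient_of_disjoint_of_sup_eq_top {K V : Type*} [Field K]
    [AddCommGroup V] [Module K V] {U C O : Submodule K V} [FiniteDimensional K (V ⧸ C)]
    (hUC : Disjoint U C) (hUO : U ⊔ O = ⊤) : FiniteDimensional K (V ⧸ O) := by
  have : FiniteDimensional K U := Module.Finite.of_injective (C.mkQ ∘ₗ U.subtype) <| by
    rw [← LinearMap.ker_eq_bot, LinearMap.ker_comp, Submodule.ker_mkQ,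
      ← Submodule.disjoint_iff_comap_eq_bot]
    exact hUC
  exact Module.Finite.of_surjective (O.mkQ ∘ₗ U.subtype) <| by
    rw [← LinearMap.range_eq_top, LinearMap.range_comp, Submodule.range_subtype,
      Submodule.map_mkQ_eq_top, sup_comm, hUO]

theorem Submodule.finiteDimensional_quotient_of_filtration {K V : Type*} [Field K]
    [AddCommGroup V] [Module K V] {Fil : ℕ → Submodule K V} (hmono : Monotone Fil)
    (hbot : Fil 0 = ⊥) (htop : ⨆ n, Fil n = ⊤) {C O : Submodule K V} [FiniteDimensional K (V ⧸ C)]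
    (h : ∀ n, Fil (n + 1) ⊓ C ≤ Fil n ⊔ O) : FiniteDimensional K (V ⧸ O) := by
  choose Y hYdisj hYsup using fun n =>
    IsModularLattice.exists_disjoint_and_sup_eq (inf_le_left : Fil (n + 1) ⊓ (Fil n ⊔ C) ≤ _)
  have hYle : ∀ n, Y n ≤ Fil (n + 1) := fun n => hYsup n ▸ le_sup_right
  have hUC : Disjoint (⨆ n, Y n) C := by
    refine disjoint_iSup_of_disjoint_iSup_lt_sup fun n => ?_
    have hY : Disjoint (Y n) (Fil n ⊔ C) := by
      rw [disjoint_iff, ← inf_eq_left.2 (hYle n), inf_assoc, ← disjoint_iff]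
      exact (hYdisj n).symm
    refine hY.mono_right (sup_le_sup_right (iSup₂_le fun k hk => ?_) C)
    exact (hYle k).trans (hmono hk)
  refine Submodule.finiteDimensional_quotient_of_disjoint_of_sup_eq_top hUC (top_le_iff.1 ?_)
  rw [← htop]
  refine iSup_le fun n => ?_
  induction n with
  | zero => simp [hbot]
  | succ n ih =>
    rw [← hYsup n, inf_comm, sup_inf_assoc_of_le C (hmono n.le_succ), inf_comm]
    exact sup_le (sup_le ih ((h n).trans (sup_le ih le_sup_right)))
      (le_sup_of_le_left (le_iSup Y n))

theorem Monotone.exists_forall_ge_eq_of_int {α : Type*} [PartialOrder α] [WellFoundedGT α]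
    {f : ℤ → α} (hf : Monotone f) : ∃ N, ∀ p, N ≤ p → f p = f N := by
  obtain ⟨n, hn⟩ := WellFoundedGT.monotone_chain_condition
    ⟨fun n : ℕ => f n, fun m n hmn => hf (Int.ofNat_le.2 hmn)⟩
  refine ⟨n, fun p hp => ?_⟩
  lift p to ℕ using (Int.natCast_nonneg n).trans hp
  exact (hn p (Int.ofNat_le.1 hp)).symm

lemma cc_zero (p : ℤ) : cc p 0 = 1 := by simp [cc]

lemma cc_one (p : ℤ) : cc p 1 = p := by simp [cc]

lemma cc_eq_zero {d i : ℕ} (h : d < i) : cc d i = 0 := by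
  rw [cc, Finset.prod_eq_zero (Finset.mem_range.2 h) (by push_cast; ring), zero_div]

namespace VertexAlg

variable {V : Type*} [AddCommGroup V] [Module ℂ V] (𝒱 : VertexAlg V)

lemma nmul_zero_left (n : ℤ) (b : V) : 𝒱.nmul n 0 b = 0 := by
  simpa using 𝒱.nmul_smul_left n 0 0 b

lemma nmul_zero_right (n : ℤ) (a : V) : 𝒱.nmul n a 0 = 0 := by
  simpa using 𝒱.nmul_smul_right n 0 a 0

def translation : V →ₗ[ℂ] V where
  toFun a := 𝒱.nmul (-2) a 𝒱.one
  map_add' _ _ := 𝒱.nmul_add_left _ _ _ _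
  map_smul' _ _ := 𝒱.nmul_smul_left _ _ _ _

@[simp]
lemma translation_apply (a : V) : 𝒱.translation a = 𝒱.nmul (-2) a 𝒱.one := rfl

def c₂ : Submodule ℂ V := Submodule.span ℂ {y : V | ∃ a b : V, y = 𝒱.nmul (-2) a b}

variable (Vd : ℕ → Submodule ℂ V)

/-- Zhu's `O(V)`, spanned by `a ∘ b = Res_z Y(a, z) b (1 + z)^{wt a} / z²` for homogeneous `a`. -/
def zhuO : Submodule ℂ V :=
  Submodule.span ℂ {y : V | ∃ (d : ℕ) (a b : V), a ∈ Vd d ∧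
    y = ∑ᶠ i : ℕ, cc (d : ℤ) i • 𝒱.nmul ((i : ℤ) - 2) a b}

def IsGraded : Prop :=
  ∀ (d e : ℕ) (n : ℤ) (a b : V), a ∈ Vd d → b ∈ Vd e →
    𝒱.nmul n a b ∈ ⨆ (d' : ℕ) (_ : (d' : ℤ) = (d : ℤ) + e - n - 1), Vd d'

def c₂Le (w : ℕ) : Submodule ℂ V :=
  Submodule.span ℂ {y : V | ∃ (d e : ℕ) (a b : V), a ∈ Vd d ∧ b ∈ Vd e ∧ d + e + 1 ≤ w ∧
    y = 𝒱.nmul (-2) a b}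

variable {𝒱 Vd}

lemma IsGraded.nmul_mem (hVd : 𝒱.IsGraded Vd) {d e w : ℕ} {a b : V} (n : ℤ) (ha : a ∈ Vd d)
    (hb : b ∈ Vd e) (hw : (w : ℤ) = d + e - n - 1) : 𝒱.nmul n a b ∈ Vd w := by
  simpa [← hw] using hVd d e n a b ha hb

lemma IsGraded.translation_mem (hVd : 𝒱.IsGraded Vd) (hone : 𝒱.one ∈ Vd 0) {m : ℕ} {z : V}
    (hz : z ∈ Vd m) : 𝒱.translation z ∈ Vd (m + 1) :=
  hVd.nmul_mem (-2) hz hone (by push_cast; ring)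

lemma translation_add_smul_mem_zhuO {m : ℕ} {z : V} (hz : z ∈ Vd m) :
    𝒱.translation z + (m : ℂ) • z ∈ 𝒱.zhuO Vd := by
  have hgen : ∑ᶠ i : ℕ, cc (m : ℤ) i • 𝒱.nmul ((i : ℤ) - 2) z 𝒱.one ∈ 𝒱.zhuO Vd :=
    Submodule.subset_span ⟨m, z, 𝒱.one, hz, rfl⟩
  rw [finsum_eq_sum_of_support_subset (s := Finset.range 2) _ fun i hi => ?_,
    Finset.sum_range_succ, Finset.sum_range_one, cc_zero, cc_one] at hgen
  · simpa [𝒱.nmul_neg_one_one] using hgen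
  · by_contra hi2
    simp only [Finset.coe_range, Set.mem_Iio, not_lt] at hi2
    simp [𝒱.nmul_one _ ((i : ℤ) - 2) (by omega)] at hi

lemma IsGraded.translation_pow_sub_mem_zhuO (hVd : 𝒱.IsGraded Vd) (hone : 𝒱.one ∈ Vd 0)
    {m : ℕ} {z : V} (hz : z ∈ Vd m) (j : ℕ) :
    (𝒱.translation ^ j) z - (descPochhammer ℂ j).eval (-(m : ℂ)) • z ∈ 𝒱.zhuO Vd := by
  induction j generalizing m z with
  | zero => simp
  | succ j ih =>
    have hP : (descPochhammer ℂ (j + 1)).eval (-(m : ℂ))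
        = -m * (descPochhammer ℂ j).eval (-((m + 1 : ℕ) : ℂ)) := by
      rw [descPochhammer_succ_left, eval_mul, eval_comp]
      simp only [eval_X, eval_sub, eval_one, Nat.cast_succ, neg_add]
      ring_nf
    have hsplit : (𝒱.translation ^ (j + 1)) z - (descPochhammer ℂ (j + 1)).eval (-(m : ℂ)) • z
        = ((𝒱.translation ^ j) (𝒱.translation z)
            - (descPochhammer ℂ j).eval (-((m + 1 : ℕ) : ℂ)) • 𝒱.translation z)
          + (descPochhammer ℂ j).eval (-((m + 1 : ℕ) : ℂ)) • (𝒱.translation z + (m : ℂ) • z) := by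
      rw [pow_succ, Module.End.mul_apply, hP]
      module
    rw [hsplit]
    exact add_mem (ih (hVd.translation_mem hone hz))
      (Submodule.smul_mem _ _ (translation_add_smul_mem_zhuO hz))

lemma IsGraded.mem_zhuO_of_sum_eq_zero (hVd : 𝒱.IsGraded Vd) (hone : 𝒱.one ∈ Vd 0)
    {g : ℕ →₀ V} (hg : ∀ f, g f ∈ Vd f) (hsum : (g.sum fun _ v => v) = 0) (f : ℕ) :
    g f ∈ 𝒱.zhuO Vd := by
  by_cases hf : f ∈ g.support
  swap
  · rw [Finsupp.notMem_support_iff.1 hf]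
    exact zero_mem _
  refine Submodule.mem_of_forall_sum_descPochhammer_smul_mem _
    (w := fun f : ℕ => -(f : ℂ)) (neg_injective.comp Nat.cast_injective).injOn (fun j => ?_) f hf
  have hT : ∑ f ∈ g.support, (𝒱.translation ^ j) (g f) = 0 := by
    rw [← map_sum, ← map_zero (𝒱.translation ^ j)]
    exact congrArg _ hsum
  have hmem := Submodule.sum_mem (t := g.support) _ fun f _ =>
    hVd.translation_pow_sub_mem_zhuO hone (hg f) j
  rwa [Finset.sum_sub_distrib, hT, zero_sub, neg_mem_iff] at hmem

lemma IsGraded.inf_iSup_ne_le_zhuO (hVd : 𝒱.IsGraded Vd) (hone : 𝒱.one ∈ Vd 0) (n : ℕ) :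
    Vd n ⊓ ⨆ (f) (_ : f ≠ n), Vd f ≤ 𝒱.zhuO Vd := by
  rintro x ⟨hxn, hx⟩
  obtain ⟨g, hg, rfl⟩ := (Submodule.mem_iSup_iff_exists_finsupp _ _).1 hx
  have hgn : g n = 0 := by simpa using hg n
  have hmem := hVd.mem_zhuO_of_sum_eq_zero hone (g := g - Finsupp.single n (g.sum fun _ v => v))
    (fun f => ?_) ?_ n
  · simpa [hgn] using hmem
  · by_cases hfn : f = n
    · subst hfn
      simpa [hgn] using hxn
    · simpa [hfn] using hg f
  · rw [Finsupp.sum_sub_index fun _ _ _ => rfl, Finsupp.sum_single_index rfl, sub_self]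

lemma c₂Le_mono : Monotone (𝒱.c₂Le Vd) := fun _ _ h =>
  Submodule.span_mono fun _ ⟨d, e, a, b, ha, hb, hw, hy⟩ => ⟨d, e, a, b, ha, hb, hw.trans h, hy⟩

lemma c₂_le_iSup_c₂Le (htop : ⨆ d, Vd d = ⊤) : 𝒱.c₂ ≤ ⨆ w, 𝒱.c₂Le Vd w := by
  rw [c₂, Submodule.span_le]
  rintro _ ⟨a, b, rfl⟩
  have ha : a ∈ ⨆ d, Vd d := htop ▸ Submodule.mem_top
  have hb : b ∈ ⨆ d, Vd d := htop ▸ Submodule.mem_top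
  refine Submodule.iSup_induction Vd (motive := fun a => 𝒱.nmul (-2) a b ∈ ⨆ w, 𝒱.c₂Le Vd w) ha
    (fun d a ha => ?_) (by simp [nmul_zero_left])
    fun a a' ha ha' => by rw [𝒱.nmul_add_left]; exact add_mem ha ha'
  refine Submodule.iSup_induction Vd (motive := fun b => 𝒱.nmul (-2) a b ∈ ⨆ w, 𝒱.c₂Le Vd w) hb
    (fun e b hb => ?_) (by simp [nmul_zero_right])
    fun b b' hb hb' => by rw [𝒱.nmul_add_right]; exact add_mem hb hb'
  exact Submodule.mem_iSup_of_mem (d + e + 1)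
    (Submodule.subset_span ⟨d, e, a, b, ha, hb, le_rfl, rfl⟩)

lemma IsGraded.c₂Le_le_iSup (hVd : 𝒱.IsGraded Vd) (w : ℕ) : 𝒱.c₂Le Vd w ≤ ⨆ d ≤ w, Vd d := by
  rw [c₂Le, Submodule.span_le]
  rintro _ ⟨d, e, a, b, ha, hb, hw, rfl⟩
  exact Submodule.mem_iSup_of_mem (d + e + 1) <| Submodule.mem_iSup_of_mem hw <|
    hVd.nmul_mem (-2) ha hb (by push_cast; ring)

lemma IsGraded.c₂Le_succ_le (hVd : 𝒱.IsGraded Vd) (w : ℕ) :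
    𝒱.c₂Le Vd (w + 1) ≤ 𝒱.c₂Le Vd w ⊔ Vd (w + 1) := by
  rw [c₂Le, Submodule.span_le]
  rintro _ ⟨d, e, a, b, ha, hb, hw, rfl⟩
  rcases Nat.lt_or_eq_of_le hw with hlt | heq
  · exact Submodule.mem_sup_left
      (Submodule.subset_span ⟨d, e, a, b, ha, hb, Nat.le_of_lt_succ hlt, rfl⟩)
  · exact Submodule.mem_sup_right (hVd.nmul_mem (-2) ha hb (by rw [← heq]; push_cast; ring))

/-- Modulo `O(V)`, the defining relation `∑ᵢ (d choose i) a₍ᵢ₋₂₎b` rewrites `a₍₋₂₎b` as a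
combination of products of strictly smaller weight. -/
lemma IsGraded.c₂Le_le_zhuO_sup (hVd : 𝒱.IsGraded Vd) (p : ℕ) :
    𝒱.c₂Le Vd p ≤ 𝒱.zhuO Vd ⊔ ⨆ d < p, Vd d := by
  rw [c₂Le, Submodule.span_le]
  rintro _ ⟨d, e, a, b, ha, hb, hw, rfl⟩
  have hgen : ∑ᶠ i : ℕ, cc (d : ℤ) i • 𝒱.nmul ((i : ℤ) - 2) a b ∈ 𝒱.zhuO Vd :=
    Submodule.subset_span ⟨d, a, b, ha, rfl⟩
  rw [finsum_eq_sum_of_support_subset (s := Finset.range (d + 1)) _ fun i hi => ?_,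
    Finset.sum_range_succ', cc_zero, one_smul] at hgen
  · have hlow : ∑ i ∈ Finset.range d, cc (d : ℤ) ↑(i + 1) • 𝒱.nmul (↑(i + 1) - 2) a b
        ∈ ⨆ d < p, Vd d := by
      refine Submodule.sum_mem _ fun i hi => Submodule.smul_mem _ _ ?_
      rw [Finset.mem_range] at hi
      refine Submodule.mem_iSup_of_mem (d + e - i) <| Submodule.mem_iSup_of_mem (by omega) ?_
      exact hVd.nmul_mem _ ha hb (by push_cast [Nat.cast_sub (by omega : i ≤ d + e)]; ring)
    simpa using sub_mem (Submodule.mem_sup_left hgen) (Submodule.mem_sup_right hlow)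
  · by_contra hid
    simp only [Finset.coe_range, Set.mem_Iio, not_lt] at hid
    simp [cc_eq_zero (Nat.lt_of_succ_le hid)] at hi

/-- As the weight spaces are only independent modulo `O(V)`, the induction has to allow
homogeneous elements of `O(V)` of weight `> p`. -/
lemma IsGraded.c₂Le_inf_le (hVd : 𝒱.IsGraded Vd) (hone : 𝒱.one ∈ Vd 0) (p w : ℕ) :
    𝒱.c₂Le Vd w ⊓ ((⨆ d ≤ p, Vd d) ⊔ ⨆ f, Vd f ⊓ 𝒱.zhuO Vd) ≤ 𝒱.zhuO Vd ⊔ 𝒱.c₂Le Vd p := by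
  induction w with
  | zero => exact inf_le_left.trans (le_sup_of_le_right (c₂Le_mono (Nat.zero_le p)))
  | succ w ih =>
    rcases le_or_gt (w + 1) p with hwp | hpw
    · exact inf_le_left.trans (le_sup_of_le_right (c₂Le_mono hwp))
    rintro c ⟨hc, hcH⟩
    obtain ⟨b, hb, a, ha, rfl⟩ := Submodule.mem_sup.1 (hVd.c₂Le_succ_le w hc)
    have hsplit : (⨆ d ≤ p, Vd d) ⊔ ⨆ f, Vd f ⊓ 𝒱.zhuO Vd
        ≤ Vd (w + 1) ⊓ 𝒱.zhuO Vd ⊔ ⨆ (f) (_ : f ≠ w + 1), Vd f := by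
      refine sup_le (le_sup_of_le_right (biSup_mono fun d hd => by omega)) (iSup_le fun f => ?_)
      by_cases hf : f = w + 1
      · exact hf ▸ le_sup_left
      · exact le_sup_of_le_right (inf_le_left.trans (le_iSup₂_of_le f hf le_rfl))
    obtain ⟨o, ho, r, hr, hor⟩ := Submodule.mem_sup.1 (hsplit hcH)
    have hb' : b ∈ ⨆ (f) (_ : f ≠ w + 1), Vd f :=
      ((hVd.c₂Le_le_iSup w).trans (biSup_mono fun d hd => by omega)) hb
    have hao : a - o ∈ 𝒱.zhuO Vd := by
      refine hVd.inf_iSup_ne_le_zhuO hone (w + 1) ⟨sub_mem ha ho.1, ?_⟩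
      rw [show a - o = r - b by rw [sub_eq_sub_iff_add_eq_add, add_comm r, hor, add_comm]]
      exact sub_mem hr hb'
    have haO : a ∈ 𝒱.zhuO Vd := by simpa using add_mem hao ho.2
    have hbH : b ∈ (⨆ d ≤ p, Vd d) ⊔ ⨆ f, Vd f ⊓ 𝒱.zhuO Vd := by
      simpa using sub_mem hcH (Submodule.mem_sup_right (Submodule.mem_iSup_of_mem (w + 1)
        ⟨ha, haO⟩))
    exact add_mem (ih ⟨hb, hbH⟩) (Submodule.mem_sup_left haO)

lemma IsGraded.iSup_lt_succ_inf_c₂_le (hVd : 𝒱.IsGraded Vd) (hone : 𝒱.one ∈ Vd 0)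
    (htop : ⨆ d, Vd d = ⊤) (p : ℕ) :
    (⨆ d < p + 1, Vd d) ⊓ 𝒱.c₂ ≤ (⨆ d < p, Vd d) ⊔ 𝒱.zhuO Vd := by
  rintro c ⟨hcW, hcC⟩
  obtain ⟨w, hw⟩ := (Submodule.mem_iSup_of_directed _ c₂Le_mono.directed_le).1
    (c₂_le_iSup_c₂Le htop hcC)
  have hcW' : c ∈ ⨆ d ≤ p, Vd d := by simpa [Nat.lt_succ_iff] using hcW
  refine (sup_le le_sup_right (hVd.c₂Le_le_zhuO_sup p |>.trans (sup_comm _ _).le))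
    (hVd.c₂Le_inf_le hone p w ⟨hw, Submodule.mem_sup_left hcW'⟩)

end VertexAlg

/-- Let `V` be a `ℤ_{≥0}`-graded conformal vertex algebra with
`V₀ = ℂ𝟙` whose `C₂`-algebra `R_V = V/C₂(V)` is finite-dimensional.  Then every
term `F_p A(V)` of the weight filtration of Zhu's algebra (hence every graded
component of `gr_F A(V)`) is finite-dimensional, the filtration stabilizes, and
`A(V) = V/O(V)` is finite-dimensional. -/
theorem stmt19 {V : Type*} [AddCommGroup V] [Module ℂ V] (𝒱 : VertexAlg V)
    (Vd : ℕ → Submodule ℂ V)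
    (htop : (⨆ d, Vd d) = ⊤)
    (hzero : Vd 0 = Submodule.span ℂ {𝒱.one})
    (hgr : ∀ (d e : ℕ) (n : ℤ) (a b : V), a ∈ Vd d → b ∈ Vd e →
      𝒱.nmul n a b ∈ ⨆ (d' : ℕ) (_ : (d' : ℤ) = (d : ℤ) + e - n - 1), Vd d')
    (C2V : Submodule ℂ V)
    (hC2V : C2V = Submodule.span ℂ {y : V | ∃ a b : V, y = 𝒱.nmul (-2) a b})
    (OV : Submodule ℂ V)
    (hOV : OV = Submodule.span ℂ {y : V | ∃ (d : ℕ) (a b : V), a ∈ Vd d ∧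
      y = ∑ᶠ i : ℕ, cc (d : ℤ) i • 𝒱.nmul ((i : ℤ) - 2) a b})
    (F : ℤ → Submodule ℂ (V ⧸ OV))
    (hFdef : ∀ p : ℤ, F p = Submodule.map OV.mkQ (⨆ d ∈ {d : ℕ | (d : ℤ) ≤ p}, Vd d))
    (hC2fin : FiniteDimensional ℂ (V ⧸ C2V)) :
    (∀ p : ℤ, FiniteDimensional ℂ ↥(F p)) ∧
    (∃ N : ℤ, ∀ p : ℤ, N ≤ p → F p = F N) ∧
    FiniteDimensional ℂ (V ⧸ OV) := by
  subst hC2V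
  have hVd : 𝒱.IsGraded Vd := hgr
  have hone : 𝒱.one ∈ Vd 0 := hzero ▸ Submodule.mem_span_singleton_self _
  have : FiniteDimensional ℂ (V ⧸ 𝒱.c₂) := hC2fin
  have hfin : FiniteDimensional ℂ (V ⧸ OV) := by
    subst hOV
    exact Submodule.finiteDimensional_quotient_of_filtration (monotone_iSup_lt Vd) (by simp)
      ((iSup_iSup_lt_eq_iSup Vd).trans htop) (hVd.iSup_lt_succ_inf_c₂_le hone htop)
  refine ⟨fun p => inferInstance, Monotone.exists_forall_ge_eq_of_int fun p q hpq => ?_, hfin⟩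
  rw [hFdef, hFdef]
  exact Submodule.map_mono (biSup_mono fun d hd => le_trans hd hpq)
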